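/- arXiv:2105.06644 — 4 statements merged into one kernel-verified Lean document; each statement's English description precedes it below -/
import Mathlib

section
/- If X is a strongly star-Lindelöf topological space of cardinality less than the dominating number 𝔡, then X is strongly star-Menger. -/
open Set Filter

variable {X : Type u}

def star {X : Type u} (A : Set X) (U : Set (Set X)) : Set X :=
  ⋃₀ {u ∈ U | (u ∩ A).Nonempty}

def IsOpenCover {X : Type u} [TopologicalSpace X] (U : Set (Set X)) : Prop :=
  (∀ u ∈ U, IsOpen u) ∧ ⋃₀ U = univ

noncomputable def domNum : Cardinal :=
  sInf {c | ∃ D : Set (ℕ → ℕ), Cardinal.mk D = c ∧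
    ∀ f : ℕ → ℕ, ∃ g ∈ D, ∀ᶠ n in atTop, f n ≤ g n}

noncomputable def boundNum : Cardinal :=
  sInf {c | ∃ B : Set (ℕ → ℕ), Cardinal.mk B = c ∧
    ¬ ∃ g : ℕ → ℕ, ∀ f ∈ B, ∀ᶠ n in atTop, f n ≤ g n}

noncomputable def covMeager : Cardinal :=
  sInf {c | ∃ F : Set (ℕ → ℕ), Cardinal.mk F = c ∧
    ¬ ∃ g : ℕ → ℕ, ∀ f ∈ F, {n | g n = f n}.Infinite}

def StronglyStarLindelof (X : Type u) [TopologicalSpace X] : Prop :=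
  ∀ U : Set (Set X), IsOpenCover U →
    ∃ C : Set X, C.Countable ∧ star C U = univ

def AbsStronglyStarLindelof (X : Type u) [TopologicalSpace X] : Prop :=
  ∀ U : Set (Set X), IsOpenCover U → ∀ D : Set X, Dense D →
    ∃ C : Set X, C ⊆ D ∧ C.Countable ∧ star C U = univ

def StronglyStarMenger (X : Type u) [TopologicalSpace X] : Prop :=
  ∀ U : ℕ → Set (Set X), (∀ n, IsOpenCover (U n)) →
    ∃ F : ℕ → Finset X, ⋃ n, star (↑(F n)) (U n) = univ

def AbsStronglyStarMenger (X : Type u) [TopologicalSpace X] : Prop :=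
  ∀ U : ℕ → Set (Set X), (∀ n, IsOpenCover (U n)) → ∀ D : Set X, Dense D →
    ∃ F : ℕ → Finset X, (∀ n, ↑(F n) ⊆ D) ∧ ⋃ n, star (↑(F n)) (U n) = univ

def SelStronglyStarMenger (X : Type u) [TopologicalSpace X] : Prop :=
  ∀ U : ℕ → Set (Set X), (∀ n, IsOpenCover (U n)) →
    ∀ D : ℕ → Set X, (∀ n, Dense (D n)) →
      ∃ F : ℕ → Finset X, (∀ n, ↑(F n) ⊆ D n) ∧ ⋃ n, star (↑(F n)) (U n) = univ

def StronglyStarHurewicz (X : Type u) [TopologicalSpace X] : Prop :=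
  ∀ U : ℕ → Set (Set X), (∀ n, IsOpenCover (U n)) →
    ∃ F : ℕ → Finset X, ∀ x : X, ∀ᶠ n in atTop, x ∈ star (↑(F n)) (U n)

def SelStronglyStarHurewicz (X : Type u) [TopologicalSpace X] : Prop :=
  ∀ U : ℕ → Set (Set X), (∀ n, IsOpenCover (U n)) →
    ∀ D : ℕ → Set X, (∀ n, Dense (D n)) →
      ∃ F : ℕ → Finset X, (∀ n, ↑(F n) ⊆ D n) ∧
        ∀ x : X, ∀ᶠ n in atTop, x ∈ star (↑(F n)) (U n)

def StronglyStarRothberger (X : Type u) [TopologicalSpace X] : Prop :=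
  ∀ U : ℕ → Set (Set X), (∀ n, IsOpenCover (U n)) →
    ∃ x : ℕ → X, ⋃ n, star {x n} (U n) = univ

def SelStronglyStarRothberger (X : Type u) [TopologicalSpace X] : Prop :=
  ∀ U : ℕ → Set (Set X), (∀ n, IsOpenCover (U n)) →
    ∀ D : ℕ → Set X, (∀ n, Dense (D n)) →
      ∃ d : ℕ → X, (∀ n, d n ∈ D n) ∧ ⋃ n, star {d n} (U n) = univ

def DiscreteIn {X : Type u} [TopologicalSpace X] (C : Set X) : Prop :=
  ∀ x ∈ C, ∃ O : Set X, IsOpen O ∧ O ∩ C = {x}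

def CountableExtent (X : Type u) [TopologicalSpace X] : Prop :=
  ∀ C : Set X, IsClosed C → DiscreteIn C → C.Countable

def SelSScdOGamma (X : Type u) [TopologicalSpace X] : Prop :=
  ∀ U : ℕ → Set (Set X), (∀ n, IsOpenCover (U n)) →
    ∀ D : ℕ → Set X, (∀ n, Dense (D n)) →
      ∃ C : ℕ → Set X, (∀ n, C n ⊆ D n ∧ IsClosed (C n) ∧ DiscreteIn (C n)) ∧
        ∀ x : X, ∀ᶠ n in atTop, x ∈ star (C n) (U n)

def SelSScdOO (X : Type u) [TopologicalSpace X] : Prop :=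
  ∀ U : ℕ → Set (Set X), (∀ n, IsOpenCover (U n)) →
    ∀ D : ℕ → Set X, (∀ n, Dense (D n)) →
      ∃ C : ℕ → Set X, (∀ n, C n ⊆ D n ∧ IsClosed (C n) ∧ DiscreteIn (C n)) ∧
        ⋃ n, star (C n) (U n) = univ

def StarSigmaK (X : Type u) [TopologicalSpace X] (K : Set (Set X)) : Prop :=
  ∀ U : Set (Set X), IsOpenCover U →
    ∃ E : ℕ → Set X, (∀ m, E m ∈ K) ∧ star (⋃ m, E m) U = univ

def AbsStarSigmaK (X : Type u) [TopologicalSpace X] (K : Set (Set X)) : Prop :=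
  ∀ D : Set X, Dense D → ∀ U : Set (Set X), IsOpenCover U →
    ∃ E : ℕ → Set X, (∀ m, E m ∈ K ∧ E m ⊆ D) ∧ star (⋃ m, E m) U = univ

def AbsNbhdStarMenger (X : Type u) [TopologicalSpace X] : Prop :=
  ∀ U : ℕ → Set (Set X), (∀ n, IsOpenCover (U n)) → ∀ D : Set X, Dense D →
    ∃ F : ℕ → Finset X, (∀ n, ↑(F n) ⊆ D) ∧
      ∀ O : ℕ → Set X, (∀ n, IsOpen (O n) ∧ ↑(F n) ⊆ O n) →
        ⋃ n, star (O n) (U n) = univ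

def AbsNbhdStarHurewicz (X : Type u) [TopologicalSpace X] : Prop :=
  ∀ U : ℕ → Set (Set X), (∀ n, IsOpenCover (U n)) → ∀ D : Set X, Dense D →
    ∃ F : ℕ → Finset X, (∀ n, ↑(F n) ⊆ D) ∧
      ∀ O : ℕ → Set X, (∀ n, IsOpen (O n) ∧ ↑(F n) ⊆ O n) →
        ∀ x : X, ∀ᶠ n in atTop, x ∈ star (O n) (U n)

/-!
Strong star-Lindelöfness writes each cover `Uₙ` as the star of an enumerated countable set
`{eₙ(0), eₙ(1), …}`. For a point `x`, let `fₓ(n)` be an index `k` with `x ∈ St(eₙ(k), Uₙ)`.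
Fewer than `𝔡` functions `fₓ` do not form a dominating family, so some `g` is not dominated by
any of them: for every `x` there is an `n` with `fₓ(n) < g(n)`, and then the finite sets
`Fₙ = {eₙ(0), …, eₙ(g(n) - 1)}` have stars covering `X`.
-/

theorem mem_star_iff {A : Set X} {U : Set (Set X)} {x : X} :
    x ∈ star A U ↔ ∃ u ∈ U, (u ∩ A).Nonempty ∧ x ∈ u := by
  simp only [_root_.star, mem_sUnion, mem_sep_iff, and_assoc]

theorem star_mono {A B : Set X} (h : A ⊆ B) (U : Set (Set X)) : star A U ⊆ star B U := by
  intro x hx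
  obtain ⟨u, hu, hmeets, hxu⟩ := mem_star_iff.mp hx
  exact mem_star_iff.mpr ⟨u, hu, hmeets.mono (inter_subset_inter_right _ h), hxu⟩

theorem star_iUnion {ι : Sort*} (A : ι → Set X) (U : Set (Set X)) :
    star (⋃ i, A i) U = ⋃ i, star (A i) U := by
  ext x
  simp only [mem_iUnion, mem_star_iff, inter_iUnion, nonempty_iUnion]
  tauto

theorem star_empty (U : Set (Set X)) : star ∅ U = ∅ := by
  ext x
  simp [mem_star_iff]

theorem StronglyStarLindelof.exists_star_range_eq_univ {X : Type u} [TopologicalSpace X]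
    [Nonempty X] (h : StronglyStarLindelof X) {U : Set (Set X)} (hU : IsOpenCover U) :
    ∃ e : ℕ → X, star (range e) U = univ := by
  obtain ⟨C, hC, hstar⟩ := h U hU
  have hCne : C.Nonempty := by
    rw [nonempty_iff_ne_empty]
    rintro rfl
    exact empty_ne_univ (star_empty U ▸ hstar)
  obtain ⟨e, rfl⟩ := hC.exists_eq_range hCne
  exact ⟨e, hstar⟩

theorem exists_frequently_lt_of_mk_lt_domNum {ι : Type v}
    (hι : Cardinal.mk ι < Cardinal.lift.{v} domNum) (f : ι → ℕ → ℕ) :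
    ∃ g : ℕ → ℕ, ∀ i, ∃ᶠ n in atTop, f i n < g n := by
  by_contra! hdom
  have hle : domNum ≤ Cardinal.mk (range f) := by
    refine csInf_le' ⟨range f, rfl, fun g => ?_⟩
    obtain ⟨i, hi⟩ := hdom g
    exact ⟨f i, mem_range_self i, hi⟩
  have hrange : Cardinal.lift.{v} (Cardinal.mk (range f)) ≤ Cardinal.mk ι := by
    simpa using Cardinal.mk_range_le_lift (f := f)
  exact (Cardinal.lift_le.mpr hle |>.trans hrange).not_gt hι

theorem stmt0 {X : Type u} [TopologicalSpace X]
    (hssl : StronglyStarLindelof X) (hcard : Cardinal.mk X < Cardinal.lift.{u} domNum) :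
    StronglyStarMenger X := by
  classical
  intro U hU
  cases isEmpty_or_nonempty X
  · exact ⟨fun _ => ∅, Subsingleton.elim _ _⟩
  choose e he using fun n => hssl.exists_star_range_eq_univ (hU n)
  have hindex : ∀ x n, ∃ k, x ∈ star {e n k} (U n) := fun x n => by
    have hx : x ∈ star (range (e n)) (U n) := (he n).symm ▸ mem_univ x
    rwa [← iUnion_singleton_eq_range, star_iUnion, mem_iUnion] at hx
  choose f hf using hindex
  obtain ⟨g, hg⟩ := exists_frequently_lt_of_mk_lt_domNum hcard f
  refine ⟨fun n => (Finset.range (g n)).image (e n), eq_univ_of_forall fun x => ?_⟩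
  obtain ⟨n, hn⟩ := (hg x).exists
  have hsub : {e n (f x n)} ⊆ ((Finset.range (g n)).image (e n) : Set X) := by
    simpa using ⟨f x n, hn, rfl⟩
  exact mem_iUnion.mpr ⟨n, star_mono hsub _ (hf x n)⟩
end

section
/- If X is an absolutely strongly star-Lindelöf space of cardinality less than cov(M), then X is selectively strongly star-Rothberger: for each sequence (Uₙ) of open covers and each sequence (Dₙ) of dense subsets of X there are points dₙ ∈ Dₙ such that {St(dₙ,Uₙ) : n ∈ ω} is an open cover of X. -/
open Set Filter

variable {X : Type u}

/-! Absolute strong star-Lindelöfness gives, for each `n`, a countable `C n = {e n k : k ∈ ℕ}`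
inside `D n` whose star with respect to `U n` is `X`. Each point `x` then determines a function
`k x : ℕ → ℕ` with `x ∈ St(e n (k x n), U n)` for all `n`. These are fewer than `cov(M)`
functions, so a single `g` agrees with every `k x` infinitely often, and `d n = e n (g n)` works. -/

open scoped Cardinal

theorem star_eq_biUnion_star_singleton (A : Set X) (U : Set (Set X)) :
    star A U = ⋃ a ∈ A, star {a} U := by
  ext x
  simp only [_root_.star, mem_sUnion, mem_iUnion, exists_prop, inter_singleton_nonempty]
  constructor
  · rintro ⟨u, ⟨hu, a, hau, haA⟩, hxu⟩
    exact ⟨a, haA, u, ⟨hu, hau⟩, hxu⟩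
  · rintro ⟨a, haA, u, ⟨hu, hau⟩, hxu⟩
    exact ⟨u, ⟨hu, a, hau, haA⟩, hxu⟩

theorem exists_mem_star_singleton_of_star_eq_univ {A : Set X} {U : Set (Set X)}
    (h : star A U = univ) (x : X) : ∃ a ∈ A, x ∈ star {a} U := by
  have hx : x ∈ star A U := h ▸ mem_univ x
  rw [star_eq_biUnion_star_singleton, mem_iUnion₂] at hx
  simpa only [exists_prop] using hx

theorem exists_infinite_eq_of_mk_lt_covMeager {F : Set (ℕ → ℕ)} (hF : #F < covMeager) :
    ∃ g : ℕ → ℕ, ∀ f ∈ F, {n | g n = f n}.Infinite := by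
  by_contra h
  exact hF.not_ge (csInf_le' ⟨F, rfl, h⟩)

theorem exists_forall_frequently_of_mk_lt_covMeager {α : Type*} {C : ℕ → Set α}
    (hCc : ∀ n, (C n).Countable) (hCne : ∀ n, (C n).Nonempty) (P : X → ℕ → α → Prop)
    (hP : ∀ x n, ∃ c ∈ C n, P x n c) (hX : #X < Cardinal.lift.{u} covMeager) :
    ∃ d : ℕ → α, (∀ n, d n ∈ C n) ∧ ∀ x, ∃ᶠ n in atTop, P x n (d n) := by
  choose e he using fun n => (hCc n).exists_eq_range (hCne n)
  have hP' : ∀ x n, ∃ k, P x n (e n k) := fun x n => by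
    obtain ⟨c, hc, hPc⟩ := hP x n
    obtain ⟨k, rfl⟩ := he n ▸ hc
    exact ⟨k, hPc⟩
  choose k hk using hP'
  have hkX : #(range k) < covMeager := by
    refine Cardinal.lift_lt.{0, u}.1 ?_
    exact (Cardinal.mk_range_le_lift.trans_eq (Cardinal.lift_id' _)).trans_lt hX
  obtain ⟨g, hg⟩ := exists_infinite_eq_of_mk_lt_covMeager hkX
  refine ⟨fun n => e n (g n), fun n => he n ▸ mem_range_self (g n), fun x => ?_⟩
  refine Nat.frequently_atTop_iff_infinite.2 ((hg (k x) (mem_range_self x)).mono ?_)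
  intro n (hn : g n = k x n)
  show P x n (e n (g n))
  rw [hn]
  exact hk x n

theorem stmt7 {X : Type u} [TopologicalSpace X] [Nonempty X]
    (hassl : AbsStronglyStarLindelof X) (hcard : Cardinal.mk X < Cardinal.lift.{u} covMeager) :
    SelStronglyStarRothberger X := by
  intro U hU D hD
  choose C hCD hCc hCU using fun n => hassl (U n) (hU n) (D n) (hD n)
  have hcover (x : X) (n : ℕ) : ∃ c ∈ C n, x ∈ star {c} (U n) :=
    exists_mem_star_singleton_of_star_eq_univ (hCU n) x
  have hCne (n : ℕ) : (C n).Nonempty :=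
    let ⟨c, hc, _⟩ := hcover (Classical.arbitrary X) n
    ⟨c, hc⟩
  obtain ⟨d, hdC, hd⟩ := exists_forall_frequently_of_mk_lt_covMeager hCc hCne
    (fun x n c => x ∈ star {c} (U n)) hcover hcard
  exact ⟨d, fun n => hCD n (hdC n), eq_univ_of_forall fun x => mem_iUnion.2 (hd x).exists⟩
end

section
/- If X is an absolutely strongly star-Lindelöf space of cardinality less than 𝔟, then X is selectively strongly star-Hurewicz: for each sequence (Uₙ) of open covers and each sequence (Dₙ) of dense subsets of X there are finite sets Fₙ ⊆ Dₙ such that every x ∈ X lies in St(Fₙ,Uₙ) for all but finitely many n. -/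
open Set Filter

variable {X : Type u}

/-!
Apply absolute strong star-Lindelöfness to each pair `(Uₙ, Dₙ)` to get countable sets `Cₙ ⊆ Dₙ`,
enumerated as `eₙ 0, eₙ 1, …`, with `St(Cₙ, Uₙ) = X`. Each point `x` then determines a function
`fₓ : ℕ → ℕ`, with `fₓ n` an index `k` such that `x ∈ St({eₙ k}, Uₙ)`. Fewer than `𝔟` such functions are
bounded by a single `g`, so the finite sets `Fₙ = {eₙ k | k ≤ g n}` work.
-/

theorem star_mono_left {A B : Set X} (U : Set (Set X)) (h : A ⊆ B) : star A U ⊆ star B U :=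
  fun _ ⟨u, ⟨hu, hA⟩, hx⟩ => ⟨u, ⟨hu, hA.mono (inter_subset_inter_right _ h)⟩, hx⟩

theorem star_range (e : ℕ → X) (U : Set (Set X)) : star (range e) U = ⋃ k, star {e k} U := by
  rw [← iUnion_singleton_eq_range, star_iUnion]

theorem nonempty_of_star_eq_univ [Nonempty X] {C : Set X} {U : Set (Set X)}
    (h : star C U = univ) : C.Nonempty := by
  have hx : Classical.arbitrary X ∈ star C U := h ▸ mem_univ _
  obtain ⟨u, ⟨-, hu⟩, -⟩ := hx
  exact hu.mono inter_subset_right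

theorem exists_enum_of_star_eq_univ [Nonempty X] {C : Set X} {U : Set (Set X)}
    (hC : C.Countable) (h : star C U = univ) :
    ∃ e : ℕ → X, range e = C ∧ ∀ x, ∃ k, x ∈ star {e k} U := by
  obtain ⟨e, rfl⟩ := hC.exists_eq_range (nonempty_of_star_eq_univ h)
  refine ⟨e, rfl, fun x => ?_⟩
  have hx : x ∈ star (range e) U := h ▸ mem_univ x
  simpa only [star_range, mem_iUnion] using hx

theorem exists_eventually_le_of_mk_lt_boundNum {ι : Type u} (f : ι → ℕ → ℕ)
    (h : Cardinal.mk ι < Cardinal.lift.{u} boundNum) :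
    ∃ g : ℕ → ℕ, ∀ i, ∀ᶠ n in atTop, f i n ≤ g n := by
  by_contra hunbdd
  have hle : boundNum ≤ Cardinal.mk (range f) :=
    csInf_le' ⟨range f, rfl, fun ⟨g, hg⟩ => hunbdd ⟨g, fun i => hg _ (mem_range_self i)⟩⟩
  refine h.not_ge ?_
  calc Cardinal.lift.{u} boundNum ≤ Cardinal.lift.{u} (Cardinal.mk (range f)) :=
        Cardinal.lift_le.mpr hle
    _ ≤ Cardinal.lift.{0} (Cardinal.mk ι) := Cardinal.mk_range_le_lift
    _ = Cardinal.mk ι := Cardinal.lift_uzero _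

theorem stmt9 {X : Type u} [TopologicalSpace X]
    (hassl : AbsStronglyStarLindelof X) (hcard : Cardinal.mk X < Cardinal.lift.{u} boundNum) :
    SelStronglyStarHurewicz X := by
  intro U hU D hD
  cases isEmpty_or_nonempty X
  · exact ⟨fun _ => ∅, by simp, isEmptyElim⟩
  choose C hCD hCc hCU using fun n => hassl (U n) (hU n) (D n) (hD n)
  choose e he f hf using fun n => exists_enum_of_star_eq_univ (hCc n) (hCU n)
  obtain ⟨g, hg⟩ := exists_eventually_le_of_mk_lt_boundNum (fun x n => f n x) hcard
  classical
  refine ⟨fun n => (Finset.Iic (g n)).image (e n), fun n => ?_, fun x => ?_⟩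
  · rw [Finset.coe_image]
    exact (image_subset_range _ _).trans (he n ▸ hCD n)
  · filter_upwards [hg x] with n hn
    have hmem : e n (f n x) ∈ (Finset.Iic (g n)).image (e n) :=
      Finset.mem_image_of_mem _ (Finset.mem_Iic.2 hn)
    exact star_mono_left _ (singleton_subset_iff.2 hmem) (hf n x)
end

section
/- If X is a space with countable extent of cardinality less than cov(M) satisfying selSS*_cd(O,Γ), then X is selectively strongly star-Rothberger. -/
open Set Filter

variable {X : Type u}

/-!
Enumerate each closed discrete set `Cₙ` given by `selSS*_cd(O,Γ)` (countable, by countable extent)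
as `eₙ : ℕ → Dₙ`. Every point `x` then determines a guess function `fₓ : ℕ → ℕ` such that
`x ∈ St(eₙ(fₓ n), Uₙ)` for all large `n`. There are fewer than `cov(M)` such functions, so a single
`g` agrees infinitely often with each of them, and the points `eₙ(g n)` witness the star-Rothberger
property.
-/

open Cardinal

lemma mem_star_iff_exists_singleton {x : X} {A : Set X} {U : Set (Set X)} :
    x ∈ star A U ↔ ∃ a ∈ A, x ∈ star {a} U := by
  simp only [_root_.star, mem_sUnion, mem_ofPred_eq, inter_singleton_nonempty]
  constructor
  · rintro ⟨u, ⟨huU, a, hau, haA⟩, hxu⟩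
    exact ⟨a, haA, u, ⟨huU, hau⟩, hxu⟩
  · rintro ⟨a, haA, u, ⟨huU, hau⟩, hxu⟩
    exact ⟨u, ⟨huU, a, hau, haA⟩, hxu⟩

lemma Set.Countable.exists_subset_range_subset {α : Type*} {C D : Set α} (hC : C.Countable)
    (hCD : C ⊆ D) (hD : D.Nonempty) : ∃ e : ℕ → α, C ⊆ range e ∧ range e ⊆ D := by
  obtain ⟨d, hd⟩ := hD
  obtain ⟨e, he⟩ := (hC.insert d).exists_eq_range (insert_nonempty d C)
  exact ⟨e, he ▸ subset_insert d C, he ▸ insert_subset hd hCD⟩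

lemma Filter.exists_forall_eventually_of_forall_eventually_exists {α β γ : Type*} [Nonempty γ]
    {l : Filter β} {P : α → β → γ → Prop} (h : ∀ a, ∀ᶠ b in l, ∃ c, P a b c) :
    ∃ f : α → β → γ, ∀ a, ∀ᶠ b in l, P a b (f a b) := by
  have hchoice : ∀ a b, ∃ c, (∃ c, P a b c) → P a b c := fun a b => by
    by_cases hab : ∃ c, P a b c
    · obtain ⟨c, hc⟩ := hab
      exact ⟨c, fun _ => hc⟩
    · exact ⟨Classical.arbitrary γ, fun hab' => absurd hab' hab⟩
  choose f hf using hchoice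
  exact ⟨f, fun a => (h a).mono fun b => hf a b⟩

lemma exists_frequently_eq_of_mk_lt_covMeager {ι : Type u} (f : ι → ℕ → ℕ)
    (hι : #ι < lift.{u} covMeager) : ∃ g : ℕ → ℕ, ∀ i, ∃ᶠ n in atTop, g n = f i n := by
  by_contra! hf
  have hle : covMeager ≤ #(range f) := by
    refine csInf_le' ⟨range f, rfl, ?_⟩
    rintro ⟨g, hg⟩
    obtain ⟨i, hi⟩ := hf g
    exact Nat.frequently_atTop_iff_infinite.2 (hg _ ⟨i, rfl⟩) hi
  have hrange : lift.{u} #(range f) ≤ lift.{0} #ι := mk_range_le_lift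
  rw [lift_uzero] at hrange
  exact (lift_le.2 hle).trans hrange |>.not_gt hι

lemma exists_frequently_of_mk_lt_covMeager {ι : Type u} (hι : #ι < lift.{u} covMeager)
    {P : ι → ℕ → ℕ → Prop} (hP : ∀ i, ∀ᶠ n in atTop, ∃ k, P i n k) :
    ∃ g : ℕ → ℕ, ∀ i, ∃ᶠ n in atTop, P i n (g n) := by
  obtain ⟨f, hf⟩ := exists_forall_eventually_of_forall_eventually_exists hP
  obtain ⟨g, hg⟩ := exists_frequently_eq_of_mk_lt_covMeager f hι
  exact ⟨g, fun i => ((hg i).and_eventually (hf i)).mono fun n ⟨heq, hn⟩ => heq ▸ hn⟩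

lemma SelSScdOGamma.exists_seq_eventually_mem_star [TopologicalSpace X] [Nonempty X]
    (h : SelSScdOGamma X) (hext : CountableExtent X) {U : ℕ → Set (Set X)}
    (hU : ∀ n, IsOpenCover (U n)) {D : ℕ → Set X} (hD : ∀ n, Dense (D n)) :
    ∃ e : ℕ → ℕ → X, (∀ n k, e n k ∈ D n) ∧
      ∀ x, ∀ᶠ n in atTop, ∃ k, x ∈ star {e n k} (U n) := by
  obtain ⟨C, hC, hCU⟩ := h U hU D hD
  have henum : ∀ n, ∃ e : ℕ → X, C n ⊆ range e ∧ range e ⊆ D n := fun n =>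
    (hext _ (hC n).2.1 (hC n).2.2).exists_subset_range_subset (hC n).1 (hD n).nonempty
  choose e hCe heD using henum
  refine ⟨e, fun n k => heD n (mem_range_self k), fun x => (hCU x).mono fun n hx => ?_⟩
  obtain ⟨a, ha, hxa⟩ := mem_star_iff_exists_singleton.1 hx
  obtain ⟨k, rfl⟩ := hCe n ha
  exact ⟨k, hxa⟩

theorem stmt16 {X : Type u} [TopologicalSpace X] [Nonempty X]
    (hext : CountableExtent X) (hcard : Cardinal.mk X < Cardinal.lift.{u} covMeager)
    (h : SelSScdOGamma X) : SelStronglyStarRothberger X := by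
  intro U hU D hD
  obtain ⟨e, heD, he⟩ := h.exists_seq_eventually_mem_star hext hU hD
  obtain ⟨g, hg⟩ := exists_frequently_of_mk_lt_covMeager hcard he
  exact ⟨fun n => e n (g n), fun n => heD n (g n),
    eq_univ_of_forall fun x => mem_iUnion.2 (hg x).exists⟩
end
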